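/- arXiv:1704.00062 — 2 statements merged into one kernel-verified Lean document; each statement's English description precedes it below -/
import Mathlib

section
/- Let (X, O_X) be a ringed space and 0 → F' → F → F'' → 0 an exact sequence of locally free O_X-modules of finite rank. Then for every r ≥ 0 there is a finite decreasing filtration Λ^r F = G^0 ⊇ G^1 ⊇ ... ⊇ G^r ⊇ G^{r+1} = 0 by O_X-submodules with successive quotients G^p/G^{p+1} ≅ Λ^p F' ⊗_{O_X} Λ^{r-p} F''. -/
/-!
A splitting `M ≃ M' × M''` of the sequence turns bases of `M'` and `M''`, indexed by `ι'` and
`ι''`, into a basis of `M` indexed by `ι' ⊕ ι''`, and hence into the basis `e_S` of `⋀^r M`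
indexed by the `r`-subsets `S` of `ι' ⊕ ι''`. Take `G^p` to be spanned by the `e_S` with
`|S ∩ ι'| ≥ p`. Reading off the coordinates along the `e_S` with `|S ∩ ι'| = p` maps `G^p` onto a
free module with kernel `G^(p+1)`, and `S ↦ (S ∩ ι', S ∩ ι'')` identifies these `S` with the index
set of the tensor basis of `⋀^p M' ⊗ ⋀^(r-p) M''`.
-/

open scoped TensorProduct

namespace Module.Basis

variable {R V W κ : Type*} [Semiring R] [AddCommMonoid V] [Module R V] [AddCommMonoid W]
  [Module R W] (B : Basis κ R V) (deg : κ → ℕ)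

def filtrationByDegree (p : ℕ) : Submodule R V :=
  Submodule.span R (B '' {s | p ≤ deg s})

theorem mem_filtrationByDegree_iff {p : ℕ} {x : V} :
    x ∈ B.filtrationByDegree deg p ↔ ∀ s ∈ (B.repr x).support, p ≤ deg s :=
  B.mem_span_image

theorem filtrationByDegree_zero : B.filtrationByDegree deg 0 = ⊤ := by
  simp [filtrationByDegree, B.span_eq]

theorem filtrationByDegree_eq_bot {p : ℕ} (h : ∀ s, deg s < p) :
    B.filtrationByDegree deg p = ⊥ := by
  simp [filtrationByDegree, h]

theorem filtrationByDegree_antitone : Antitone (B.filtrationByDegree deg) :=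
  fun _ _ hpq => Submodule.span_mono (Set.image_mono fun _ hs => hpq.trans hs)

section

variable {deg} {p : ℕ} (C : Basis {s // deg s = p} R W)

noncomputable def degreeComponent : V →ₗ[R] W :=
  C.repr.symm.toLinearMap ∘ₗ Finsupp.lcomapDomain Subtype.val Subtype.val_injective ∘ₗ
    B.repr.toLinearMap

@[simp]
theorem repr_degreeComponent (x : V) (i : {s // deg s = p}) :
    C.repr (B.degreeComponent C x) i = B.repr x i := by
  simp [degreeComponent]

theorem degreeComponent_basis (i : {s // deg s = p}) : B.degreeComponent C (B i) = C i :=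
  C.repr.injective <| Finsupp.ext fun j => by
    rw [repr_degreeComponent, B.repr_self, Finsupp.single_apply_left Subtype.val_injective,
      C.repr_self]

theorem map_degreeComponent_filtrationByDegree :
    (B.filtrationByDegree deg p).map (B.degreeComponent C) = ⊤ := by
  rw [eq_top_iff, ← C.span_eq, Submodule.span_le]
  rintro _ ⟨i, rfl⟩
  exact ⟨B i, Submodule.subset_span ⟨i, i.2.ge, rfl⟩, B.degreeComponent_basis C i⟩

theorem filtrationByDegree_succ :
    B.filtrationByDegree deg (p + 1) =
      B.filtrationByDegree deg p ⊓ LinearMap.ker (B.degreeComponent C) := by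
  ext x
  simp only [Submodule.mem_inf, mem_filtrationByDegree_iff, LinearMap.mem_ker,
    ← C.repr.map_eq_zero_iff, Finsupp.ext_iff, repr_degreeComponent, Finsupp.coe_zero,
    Pi.zero_apply, Subtype.forall, Finsupp.mem_support_iff]
  constructor
  · intro h
    exact ⟨fun s hs => Nat.le_of_succ_le (h s hs),
      fun s hs => by_contra fun hx => (Nat.lt_of_succ_le (h s hx)).ne' hs⟩
  · rintro ⟨hge, hzero⟩ s hs
    exact (hge s hs).lt_of_ne fun h => hs (hzero s h.symm)

end

theorem exists_surjective_ker_eq_filtrationByDegree_succ {p : ℕ}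
    (C : Basis {s // deg s = p} R W) :
    ∃ φ : B.filtrationByDegree deg p →ₗ[R] W, Function.Surjective φ ∧
      LinearMap.ker φ =
        (B.filtrationByDegree deg (p + 1)).comap (B.filtrationByDegree deg p).subtype := by
  refine ⟨B.degreeComponent C ∘ₗ (B.filtrationByDegree deg p).subtype, ?_, ?_⟩
  · rw [← LinearMap.range_eq_top, LinearMap.range_comp, Submodule.range_subtype,
      map_degreeComponent_filtrationByDegree]
  · rw [LinearMap.ker_comp, B.filtrationByDegree_succ C, Submodule.comap_inf,
      Submodule.comap_subtype_self, top_inf_eq]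

end Module.Basis

namespace Set.powersetCard

variable {α β : Type*} {p r : ℕ}

def sumEquiv (hpr : p ≤ r) :
    {S : powersetCard (α ⊕ β) r // S.val.toLeft.card = p} ≃
      powersetCard α p × powersetCard β (r - p) where
  toFun S := (⟨S.1.val.toLeft, S.2⟩, ⟨S.1.val.toRight, by
    have := S.1.val.card_toLeft_add_card_toRight
    simp only [mem_iff]; rw [S.1.2, S.2] at this; omega⟩)
  invFun st := ⟨⟨st.1.val.disjSum st.2.val, by simp [hpr]⟩, by simp⟩
  left_inv S := Subtype.ext (Subtype.ext S.1.val.toLeft_disjSum_toRight)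
  right_inv st := by simp

end Set.powersetCard

theorem exteriorPower_filtration_general {R M' M M'' : Type} [CommRing R]
    [AddCommGroup M'] [Module R M'] [AddCommGroup M] [Module R M]
    [AddCommGroup M''] [Module R M'']
    [Module.Free R M']
    [Module.Free R M'']
    (f : M' →ₗ[R] M) (g : M →ₗ[R] M'')
    (hf : Function.Injective f) (hg : Function.Surjective g)
    (hfg : Function.Exact f g) (r : ℕ) :
    ∃ G : ℕ → Submodule R (⋀[R]^r M),
      G 0 = ⊤ ∧ (∀ p, r + 1 ≤ p → G p = ⊥) ∧ (∀ p, G (p + 1) ≤ G p) ∧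
      ∀ p ≤ r, ∃ φ : ↥(G p) →ₗ[R] ((⋀[R]^p M') ⊗[R] (⋀[R]^(r - p) M'')),
        Function.Surjective φ ∧
        LinearMap.ker φ = Submodule.comap (G p).subtype (G (p + 1)) := by
  classical
  obtain ⟨l, hl⟩ := Module.projective_lifting_property g LinearMap.id hg
  let e : M ≃ₗ[R] M' × M'' := (hfg.splitSurjectiveEquiv hf ⟨l, hl⟩).1
  obtain ⟨⟨ι', b'⟩⟩ := Module.Free.exists_basis (R := R) (M := M')
  obtain ⟨⟨ι'', b''⟩⟩ := Module.Free.exists_basis (R := R) (M := M'')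
  let : LinearOrder ι' := linearOrderOfSTO WellOrderingRel
  let : LinearOrder ι'' := linearOrderOfSTO WellOrderingRel
  let : LinearOrder (ι' ⊕ ι'') := linearOrderOfSTO WellOrderingRel
  let B := ((b'.prod b'').map e.symm).exteriorPower r
  let deg : Set.powersetCard (ι' ⊕ ι'') r → ℕ := fun S => S.val.toLeft.card
  have deg_le (S) : deg S ≤ r := S.2 ▸ S.val.card_toLeft_le
  refine ⟨B.filtrationByDegree deg, B.filtrationByDegree_zero deg,
    fun p hp => B.filtrationByDegree_eq_bot deg fun S => (deg_le S).trans_lt hp,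
    fun p => B.filtrationByDegree_antitone deg p.le_succ, fun p hp => ?_⟩
  exact B.exists_surjective_ker_eq_filtrationByDegree_succ deg
    (((b'.exteriorPower p).tensorProduct (b''.exteriorPower (r - p))).reindex
      (Set.powersetCard.sumEquiv hp).symm)

/-- Exterior-power filtration (module-theoretic version): given a short exact sequence
`0 → M' → M → M'' → 0` of finite free modules over a commutative ring `R`, for every
`r ≥ 0` there is a finite decreasing filtration `Λ^r M = G^0 ⊇ G^1 ⊇ ⋯ ⊇ G^r ⊇ G^{r+1} = 0`
by submodules with successive quotients `G^p/G^{p+1} ≅ Λ^p M' ⊗ Λ^{r-p} M''` (expressed as: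
a surjection `G^p → Λ^p M' ⊗ Λ^{r-p} M''` with kernel `G^{p+1}`). -/
theorem exteriorPower_filtration {R M' M M'' : Type} [CommRing R]
    [AddCommGroup M'] [Module R M'] [AddCommGroup M] [Module R M]
    [AddCommGroup M''] [Module R M'']
    [Module.Free R M'] [Module.Finite R M']
    [Module.Free R M] [Module.Finite R M]
    [Module.Free R M''] [Module.Finite R M'']
    (f : M' →ₗ[R] M) (g : M →ₗ[R] M'')
    (hf : Function.Injective f) (hg : Function.Surjective g)
    (hfg : Function.Exact f g) (r : ℕ) :
    ∃ G : ℕ → Submodule R (⋀[R]^r M),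
      G 0 = ⊤ ∧ (∀ p, r + 1 ≤ p → G p = ⊥) ∧ (∀ p, G (p + 1) ≤ G p) ∧
      ∀ p ≤ r, ∃ φ : ↥(G p) →ₗ[R] ((⋀[R]^p M') ⊗[R] (⋀[R]^(r - p) M'')),
        Function.Surjective φ ∧
        LinearMap.ker φ = Submodule.comap (G p).subtype (G (p + 1)) :=
  exteriorPower_filtration_general f g hf hg hfg r
end

section
/- Ratio of complex-place Gamma factors at integer arguments: with notation as in Serre's functional equation at a complex place, let h(p,q) ≥ 0 for p+q = j, and assume h(p, j-p) = h(j-p, p) (Hodge symmetry). Let B = Σ_p h(p, j-p). Then for every integer r at which all leading terms are defined, (Γ^j)^*(r) / (Γ^{2d-2-j})^*(d-r) = ± 2^k · (∏_p Γ*(r-p)^{2h(p,j-p)}) · π^{-B(2r - (j+1))} for some integer k, where Γ^j(s) = ∏_{p+q=j} Γ_ℂ(s - min(p,q))^{h(p,q)}, Γ_ℂ(s) = (2π)^{-s}Γ(s), the dual factor uses h(p',q') = h(d-1-q', d-1-p') = h(p,q) under p' = d-1-p, q' = d-1-q, and G*(r) denotes the leading Laurent coefficient of a meromorphic function G at r.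 -/
/-- The leading coefficient of the Laurent expansion of the Gamma function at the
integer `r`. -/
noncomputable def GammaStar (r : ℤ) : ℂ :=
  if 1 ≤ r then Complex.Gamma (r : ℂ)
  else (-1 : ℂ) ^ (-r).toNat / ((((-r).toNat).factorial : ℂ))

/-- The leading Laurent coefficient of `Γ_ℂ(s) = (2π)^{-s}Γ(s)` at the integer `r`. -/
noncomputable def GammaCStar (r : ℤ) : ℂ := (2 * (Real.pi : ℂ)) ^ (-r) * GammaStar r

noncomputable def gsSgn (n : ℤ) : ℂ :=
  (-1) ^ (if 1 ≤ n then (n - 1).toNat else (-n).toNat)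

lemma gsSgn_eq_or (n : ℤ) : gsSgn n = 1 ∨ gsSgn n = -1 := neg_one_pow_eq_or ℂ _

lemma GammaStar_reflect (n : ℤ) : GammaStar n * GammaStar (1 - n) = gsSgn n := by
  rcases le_or_gt 1 n with hn | hn
  · obtain ⟨m, rfl⟩ : ∃ m : ℕ, n = (m : ℤ) + 1 := ⟨(n - 1).toNat, by omega⟩
    have h1 : GammaStar ((m : ℤ) + 1) = (m.factorial : ℂ) := by
      rw [GammaStar, if_pos (by omega)]
      push_cast
      exact Complex.Gamma_nat_eq_factorial m
    have h2 : GammaStar (1 - ((m : ℤ) + 1)) = (-1 : ℂ) ^ m / (m.factorial : ℂ) := by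
      rw [GammaStar, if_neg (by omega)]
      congr 2 <;> simp
    rw [h1, h2, gsSgn, if_pos (by omega)]
    have hf : (m.factorial : ℂ) ≠ 0 := Nat.cast_ne_zero.mpr m.factorial_ne_zero
    have hm : ((m : ℤ) + 1 - 1).toNat = m := by omega
    rw [hm]
    field_simp
  · obtain ⟨m, rfl⟩ : ∃ m : ℕ, n = -(m : ℤ) := ⟨(-n).toNat, by omega⟩
    have h1 : GammaStar (-(m : ℤ)) = (-1 : ℂ) ^ m / (m.factorial : ℂ) := by
      rw [GammaStar, if_neg (by omega)]
      congr 2 <;> simp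
    have h2 : GammaStar (1 - -(m : ℤ)) = (m.factorial : ℂ) := by
      rw [GammaStar, if_pos (by omega)]
      have hc : ((1 - -(m : ℤ) : ℤ) : ℂ) = (m : ℂ) + 1 := by push_cast; ring
      rw [hc]
      exact Complex.Gamma_nat_eq_factorial m
    rw [h1, h2, gsSgn, if_neg (by omega)]
    have hf : (m.factorial : ℂ) ≠ 0 := Nat.cast_ne_zero.mpr m.factorial_ne_zero
    have hm : (- -(m : ℤ)).toNat = m := by omega
    rw [hm]
    field_simp

lemma gammaC_key (j r p : ℤ) :
    GammaCStar (r - min p (j - p)) =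
      gsSgn (r - max p (j - p)) * (2 : ℂ) ^ (j + 1 - 2 * r) *
        (GammaStar (r - p) * GammaStar (r - (j - p))) *
        (Real.pi : ℂ) ^ (j + 1 - 2 * r) *
        GammaCStar (1 - r + max p (j - p)) := by
  set m := min p (j - p) with hm
  set M := max p (j - p) with hM
  have hmM : m + M = j := by omega
  have hpi : (Real.pi : ℂ) ≠ 0 := by
    simpa using Real.pi_ne_zero
  have h2pi : (2 * (Real.pi : ℂ)) ≠ 0 := mul_ne_zero two_ne_zero hpi
  have hpq : GammaStar (r - p) * GammaStar (r - (j - p)) =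
      GammaStar (r - m) * GammaStar (r - M) := by
    rcases le_total p (j - p) with hc | hc
    · rw [hm, hM, min_eq_left hc, max_eq_right hc]
    · rw [hm, hM, min_eq_right hc, max_eq_left hc, mul_comm]
  have hrefl : GammaStar (r - M) * GammaStar (1 - r + M) = gsSgn (r - M) := by
    have := GammaStar_reflect (r - M)
    rw [show (1 : ℤ) - (r - M) = 1 - r + M by ring] at this
    exact this
  have hsq : gsSgn (r - M) * gsSgn (r - M) = 1 := by
    rcases gsSgn_eq_or (r - M) with hs | hs <;> rw [hs] <;> ring
  rw [GammaCStar, GammaCStar, hpq]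
  have he : -(r - m) = (j + 1 - 2 * r) + -(1 - r + M) := by omega
  rw [he, zpow_add₀ h2pi, mul_zpow]
  linear_combination (-(gsSgn (r - M)) * GammaStar (r - m) * (2 : ℂ) ^ (j + 1 - 2 * r) *
      (Real.pi : ℂ) ^ (j + 1 - 2 * r) * (2 * (Real.pi : ℂ)) ^ (-(1 - r + M))) * hrefl +
    (-(GammaStar (r - m)) * (2 : ℂ) ^ (j + 1 - 2 * r) * (Real.pi : ℂ) ^ (j + 1 - 2 * r) *
      (2 * (Real.pi : ℂ)) ^ (-(1 - r + M))) * hsq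

/-- Theorem 5.1.2: ratio of complex-place Gamma factors at integer arguments.  With Hodge
numbers `h(p,q)` (`p+q=j`) satisfying Hodge symmetry and Serre duality, and
`B = Σ_p h(p,j-p)`, for every integer `r`,
`(Γ^j)^*(r) / (Γ^{2d-2-j})^*(d-r) = ± 2^k ∏_p Γ^*(r-p)^{2h(p,j-p)} · π^{-B(2r-(j+1))}`. -/
theorem gamma_factor_ratio_complex_place (d : ℕ) (hd : 1 ≤ d) (j : ℕ)
    (hj : (j : ℤ) ≤ 2 * (d : ℤ) - 2)
    (h : ℤ → ℤ → ℕ) (hsupp : ∀ p q : ℤ, p < 0 ∨ q < 0 → h p q = 0)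
    (hsym : ∀ p q : ℤ, p + q = (j : ℤ) → h p q = h q p)
    (hdual : ∀ p q : ℤ, p + q = (j : ℤ) → h p q = h ((d : ℤ) - 1 - p) ((d : ℤ) - 1 - q))
    (r : ℤ) :
    ∃ (ε : ℂ) (k : ℤ), (ε = 1 ∨ ε = -1) ∧
      (∏ p ∈ Finset.Icc (0 : ℤ) (j : ℤ),
          GammaCStar (r - min p ((j : ℤ) - p)) ^ h p ((j : ℤ) - p)) =
        ε * 2 ^ k *
          (∏ p ∈ Finset.Icc (0 : ℤ) (j : ℤ), GammaStar (r - p) ^ (2 * h p ((j : ℤ) - p))) *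
          (Real.pi : ℂ) ^
            (-((∑ p ∈ Finset.Icc (0 : ℤ) (j : ℤ), (h p ((j : ℤ) - p) : ℤ)) *
              (2 * r - ((j : ℤ) + 1)))) *
          (∏ p ∈ Finset.Icc (0 : ℤ) (2 * (d : ℤ) - 2 - (j : ℤ)),
            GammaCStar (((d : ℤ) - r) - min p (2 * (d : ℤ) - 2 - (j : ℤ) - p)) ^
              h ((d : ℤ) - 1 - p) ((d : ℤ) - 1 - (2 * (d : ℤ) - 2 - (j : ℤ) - p))) := by
  classical
  set J : Finset ℤ := Finset.Icc (0 : ℤ) (j : ℤ) with hJ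
  set c : ℤ := (j : ℤ) + 1 - 2 * r with hc
  set N : ℕ := ∑ p ∈ J, h p ((j : ℤ) - p) with hN
  refine ⟨∏ p ∈ J, gsSgn (r - max p ((j : ℤ) - p)) ^ h p ((j : ℤ) - p), c * N, ?_, ?_⟩
  · refine Finset.prod_induction _ (fun x => x = 1 ∨ x = -1) ?_ (Or.inl rfl) ?_
    · rintro a b (rfl | rfl) (rfl | rfl) <;> norm_num
    · intro x _
      rcases gsSgn_eq_or (r - max x ((j : ℤ) - x)) with hs | hs <;> rw [hs]
      · left; exact one_pow _
      · exact neg_one_pow_eq_or ℂ _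
  -- vanishing of Hodge numbers outside the admissible range
  have hvan : ∀ q : ℤ, q < 0 ∨ (j : ℤ) < q ∨ q < (j : ℤ) - (d : ℤ) + 1 ∨ (d : ℤ) - 1 < q →
      h q ((j : ℤ) - q) = 0 := by
    intro q hq
    rcases hq with hq | hq | hq | hq
    · exact hsupp _ _ (Or.inl hq)
    · exact hsupp _ _ (Or.inr (by omega))
    · rw [hdual q ((j : ℤ) - q) (by ring)]; exact hsupp _ _ (Or.inr (by omega))
    · rw [hdual q ((j : ℤ) - q) (by ring)]; exact hsupp _ _ (Or.inl (by omega))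
  -- rewrite the dual Gamma factor product
  have hD : (∏ p ∈ Finset.Icc (0 : ℤ) (2 * (d : ℤ) - 2 - (j : ℤ)),
        GammaCStar (((d : ℤ) - r) - min p (2 * (d : ℤ) - 2 - (j : ℤ) - p)) ^
          h ((d : ℤ) - 1 - p) ((d : ℤ) - 1 - (2 * (d : ℤ) - 2 - (j : ℤ) - p))) =
      ∏ p ∈ J, GammaCStar (1 - r + max p ((j : ℤ) - p)) ^ h p ((j : ℤ) - p) := by
    have step1 : (∏ p ∈ Finset.Icc (0 : ℤ) (2 * (d : ℤ) - 2 - (j : ℤ)),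
          GammaCStar (((d : ℤ) - r) - min p (2 * (d : ℤ) - 2 - (j : ℤ) - p)) ^
            h ((d : ℤ) - 1 - p) ((d : ℤ) - 1 - (2 * (d : ℤ) - 2 - (j : ℤ) - p))) =
        ∏ q ∈ Finset.Icc ((j : ℤ) - (d : ℤ) + 1) ((d : ℤ) - 1),
          GammaCStar (1 - r + max q ((j : ℤ) - q)) ^ h q ((j : ℤ) - q) := by
      refine Finset.prod_nbij' (fun p => (d : ℤ) - 1 - p) (fun q => (d : ℤ) - 1 - q)
        ?_ ?_ ?_ ?_ ?_
      · intro a ha; simp only [Finset.mem_Icc] at ha ⊢; omega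
      · intro a ha; simp only [Finset.mem_Icc] at ha ⊢; omega
      · intro a _; omega
      · intro a _; omega
      · intro a _
        have e1 : ((d : ℤ) - r) - min a (2 * (d : ℤ) - 2 - (j : ℤ) - a) =
            1 - r + max ((d : ℤ) - 1 - a) ((j : ℤ) - ((d : ℤ) - 1 - a)) := by omega
        have e2 : (d : ℤ) - 1 - (2 * (d : ℤ) - 2 - (j : ℤ) - a) = (j : ℤ) - ((d : ℤ) - 1 - a) := by
          ring
        rw [e1, e2]
    have step2 : (∏ q ∈ Finset.Icc ((j : ℤ) - (d : ℤ) + 1) ((d : ℤ) - 1),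
          GammaCStar (1 - r + max q ((j : ℤ) - q)) ^ h q ((j : ℤ) - q)) =
        ∏ q ∈ J, GammaCStar (1 - r + max q ((j : ℤ) - q)) ^ h q ((j : ℤ) - q) := by
      have hS1 : Finset.Icc (max (0 : ℤ) ((j : ℤ) - (d : ℤ) + 1)) (min (j : ℤ) ((d : ℤ) - 1)) ⊆
          Finset.Icc ((j : ℤ) - (d : ℤ) + 1) ((d : ℤ) - 1) :=
        Finset.Icc_subset_Icc (le_max_right _ _) (min_le_right _ _)
      have hS2 : Finset.Icc (max (0 : ℤ) ((j : ℤ) - (d : ℤ) + 1)) (min (j : ℤ) ((d : ℤ) - 1)) ⊆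
          J := Finset.Icc_subset_Icc (le_max_left _ _) (min_le_left _ _)
      have hz1 : ∀ x ∈ Finset.Icc ((j : ℤ) - (d : ℤ) + 1) ((d : ℤ) - 1),
          x ∉ Finset.Icc (max (0 : ℤ) ((j : ℤ) - (d : ℤ) + 1)) (min (j : ℤ) ((d : ℤ) - 1)) →
          GammaCStar (1 - r + max x ((j : ℤ) - x)) ^ h x ((j : ℤ) - x) = 1 := by
        intro x hx hxS
        simp only [Finset.mem_Icc, not_and_or, not_le] at hx hxS
        rw [hvan x (by omega), pow_zero]
      have hz2 : ∀ x ∈ J,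
          x ∉ Finset.Icc (max (0 : ℤ) ((j : ℤ) - (d : ℤ) + 1)) (min (j : ℤ) ((d : ℤ) - 1)) →
          GammaCStar (1 - r + max x ((j : ℤ) - x)) ^ h x ((j : ℤ) - x) = 1 := by
        intro x hx hxS
        simp only [hJ, Finset.mem_Icc, not_and_or, not_le] at hx hxS
        rw [hvan x (by omega), pow_zero]
      exact (Finset.prod_subset hS1 hz1).symm.trans (Finset.prod_subset hS2 hz2)
    exact step1.trans step2
  -- swap lemma for the Gamma-star product
  have hsw : (∏ p ∈ J, GammaStar (r - ((j : ℤ) - p)) ^ h p ((j : ℤ) - p)) =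
      ∏ p ∈ J, GammaStar (r - p) ^ h p ((j : ℤ) - p) := by
    refine Finset.prod_nbij' (fun p => (j : ℤ) - p) (fun p => (j : ℤ) - p) ?_ ?_ ?_ ?_ ?_
    · intro a ha; simp only [hJ, Finset.mem_Icc] at ha ⊢; omega
    · intro a ha; simp only [hJ, Finset.mem_Icc] at ha ⊢; omega
    · intro a _; omega
    · intro a _; omega
    · intro a _
      have e : (j : ℤ) - ((j : ℤ) - a) = a := by ring
      rw [e, hsym ((j : ℤ) - a) a (by ring)]
  have hGS : (∏ p ∈ J, GammaStar (r - p) ^ h p ((j : ℤ) - p)) *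
      (∏ p ∈ J, GammaStar (r - ((j : ℤ) - p)) ^ h p ((j : ℤ) - p)) =
      ∏ p ∈ J, GammaStar (r - p) ^ (2 * h p ((j : ℤ) - p)) := by
    rw [hsw, ← Finset.prod_mul_distrib]
    refine Finset.prod_congr rfl fun p _ => ?_
    rw [← pow_add, two_mul]
  -- the power-of-two product
  have h2N : (∏ p ∈ J, ((2 : ℂ) ^ c) ^ h p ((j : ℤ) - p)) = (2 : ℂ) ^ (c * (N : ℤ)) := by
    rw [Finset.prod_pow_eq_pow_sum, ← hN, zpow_mul, zpow_natCast]
  have hpiN : (∏ p ∈ J, ((Real.pi : ℂ) ^ c) ^ h p ((j : ℤ) - p)) =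
      (Real.pi : ℂ) ^ (c * (N : ℤ)) := by
    rw [Finset.prod_pow_eq_pow_sum, ← hN, zpow_mul, zpow_natCast]
  -- cast of the sum
  have hcast : (∑ p ∈ J, (h p ((j : ℤ) - p) : ℤ)) = (N : ℤ) := by
    rw [hN]; push_cast; rfl
  have hpe : -((N : ℤ) * (2 * r - ((j : ℤ) + 1))) = c * (N : ℤ) := by rw [hc]; ring
  rw [hD, hcast, hpe]
  -- expand each factor on the left via the key identity
  have hexp : ∀ p ∈ J, GammaCStar (r - min p ((j : ℤ) - p)) ^ h p ((j : ℤ) - p) =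
      gsSgn (r - max p ((j : ℤ) - p)) ^ h p ((j : ℤ) - p) *
        ((2 : ℂ) ^ c) ^ h p ((j : ℤ) - p) *
        (GammaStar (r - p) ^ h p ((j : ℤ) - p) *
          GammaStar (r - ((j : ℤ) - p)) ^ h p ((j : ℤ) - p)) *
        ((Real.pi : ℂ) ^ c) ^ h p ((j : ℤ) - p) *
        GammaCStar (1 - r + max p ((j : ℤ) - p)) ^ h p ((j : ℤ) - p) := by
    intro p _
    rw [gammaC_key (j : ℤ) r p, hc]
    ring
  calc (∏ p ∈ J, GammaCStar (r - min p ((j : ℤ) - p)) ^ h p ((j : ℤ) - p))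
      = ∏ p ∈ J, (gsSgn (r - max p ((j : ℤ) - p)) ^ h p ((j : ℤ) - p) *
          ((2 : ℂ) ^ c) ^ h p ((j : ℤ) - p) *
          (GammaStar (r - p) ^ h p ((j : ℤ) - p) *
            GammaStar (r - ((j : ℤ) - p)) ^ h p ((j : ℤ) - p)) *
          ((Real.pi : ℂ) ^ c) ^ h p ((j : ℤ) - p) *
          GammaCStar (1 - r + max p ((j : ℤ) - p)) ^ h p ((j : ℤ) - p)) :=
        Finset.prod_congr rfl hexp
    _ = (∏ p ∈ J, gsSgn (r - max p ((j : ℤ) - p)) ^ h p ((j : ℤ) - p)) *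
          (∏ p ∈ J, ((2 : ℂ) ^ c) ^ h p ((j : ℤ) - p)) *
          ((∏ p ∈ J, GammaStar (r - p) ^ h p ((j : ℤ) - p)) *
            (∏ p ∈ J, GammaStar (r - ((j : ℤ) - p)) ^ h p ((j : ℤ) - p))) *
          (∏ p ∈ J, ((Real.pi : ℂ) ^ c) ^ h p ((j : ℤ) - p)) *
          (∏ p ∈ J, GammaCStar (1 - r + max p ((j : ℤ) - p)) ^ h p ((j : ℤ) - p)) := by
        simp only [Finset.prod_mul_distrib]
    _ = _ := by
        rw [h2N, hGS, hpiN]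
end
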